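/- arXiv:2005.03353 — 8 statements merged into one kernel-verified Lean document; each statement's English description precedes it below -/
import Mathlib

section
/- Let Z be an n×k real matrix with Z^T Z positive definite, P_A an orthogonal projection matrix, and Y ∈ ℝ^n. For any κ < 1, the vector α̂ = (Z^T(I - κ P_A^⊥)Z)^{-1} Z^T(I - κ P_A^⊥)Y, where P_A^⊥ = I - P_A, is the unique minimizer over α ∈ ℝ^k of the function α ↦ (1-κ)‖Y - Zα‖² + κ‖P_A(Y - Zα)‖². -/
/-!
With `M = 1 - κ (1 - P_A) = P_A + (1 - κ)(1 - P_A)`, the objective is the weighted sum of squared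
residuals `(Y - Zα)ᵀ M (Y - Zα)`, and `M` is positive definite because `κ < 1`. Hence
`B = Zᵀ M Z` is positive definite, `α̂ = B⁻¹ Zᵀ M Y` solves the normal equations, and the residual
`Y - Zα̂` is `M`-orthogonal to the column space of `Z`, so the objective at `α` exceeds its value
at `α̂` by `(α - α̂)ᵀ B (α - α̂)`.
-/

open Matrix

section WeightedLeastSquares

variable {m n : Type*} [Fintype m] [Fintype n]

def weightedSSR (W : Matrix n n ℝ) (Z : Matrix n m ℝ) (Y : n → ℝ) (α : m → ℝ) : ℝ :=
  (Y - Z *ᵥ α) ⬝ᵥ W *ᵥ (Y - Z *ᵥ α)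

variable [DecidableEq m]

noncomputable def wlsEstimator (W : Matrix n n ℝ) (Z : Matrix n m ℝ) (Y : n → ℝ) : m → ℝ :=
  (Zᵀ * W * Z)⁻¹ *ᵥ ((Zᵀ * W) *ᵥ Y)

theorem transpose_mulVec_mulVec_sub_mulVec_wlsEstimator {W : Matrix n n ℝ} {Z : Matrix n m ℝ}
    (hB : IsUnit (Zᵀ * W * Z).det) (Y : n → ℝ) :
    Zᵀ *ᵥ (W *ᵥ (Y - Z *ᵥ wlsEstimator W Z Y)) = 0 := by
  have hnormal : (Zᵀ * W * Z) *ᵥ wlsEstimator W Z Y = (Zᵀ * W) *ᵥ Y := by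
    rw [wlsEstimator, mulVec_mulVec, mul_nonsing_inv _ hB, one_mulVec]
  rw [mulVec_mulVec, mulVec_sub, mulVec_mulVec, hnormal, sub_self]

theorem weightedSSR_eq_weightedSSR_wlsEstimator_add {W : Matrix n n ℝ} (hW : Wᵀ = W)
    {Z : Matrix n m ℝ} (hB : IsUnit (Zᵀ * W * Z).det) (Y : n → ℝ) (α : m → ℝ) :
    weightedSSR W Z Y α = weightedSSR W Z Y (wlsEstimator W Z Y) +
      (α - wlsEstimator W Z Y) ⬝ᵥ (Zᵀ * W * Z) *ᵥ (α - wlsEstimator W Z Y) := by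
  have horth := transpose_mulVec_mulVec_sub_mulVec_wlsEstimator hB Y
  have hres : Y - Z *ᵥ α = (Y - Z *ᵥ wlsEstimator W Z Y) - Z *ᵥ (α - wlsEstimator W Z Y) := by
    rw [mulVec_sub]; abel
  rw [weightedSSR, weightedSSR, hres]
  generalize Y - Z *ᵥ wlsEstimator W Z Y = u at horth ⊢
  generalize α - wlsEstimator W Z Y = d
  have hcross : (Z *ᵥ d) ⬝ᵥ W *ᵥ u = 0 := by
    rw [dotProduct_comm, ← dotProduct_transpose_mulVec, horth, dotProduct_zero]
  have hsymm : u ⬝ᵥ W *ᵥ (Z *ᵥ d) = (Z *ᵥ d) ⬝ᵥ W *ᵥ u := by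
    rw [dotProduct_mulVec, ← mulVec_transpose, hW, dotProduct_comm]
  have hquad : d ⬝ᵥ (Zᵀ * W * Z) *ᵥ d = (Z *ᵥ d) ⬝ᵥ W *ᵥ (Z *ᵥ d) := by
    rw [Matrix.mul_assoc, ← mulVec_mulVec, ← mulVec_mulVec, dotProduct_transpose_mulVec,
      dotProduct_comm]
  rw [hquad, mulVec_sub, dotProduct_sub, sub_dotProduct, sub_dotProduct, hsymm, hcross]
  ring

theorem weightedSSR_wlsEstimator_lt {W : Matrix n n ℝ} (hW : W.PosDef) {Z : Matrix n m ℝ}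
    (hZ : Function.Injective Z.mulVec) (Y : n → ℝ) {α : m → ℝ} (hα : α ≠ wlsEstimator W Z Y) :
    weightedSSR W Z Y (wlsEstimator W Z Y) < weightedSSR W Z Y α := by
  have hB : (Zᵀ * W * Z).PosDef := by
    simpa using hW.conjTranspose_mul_mul_same hZ
  rw [weightedSSR_eq_weightedSSR_wlsEstimator_add (by simpa using hW.1.eq)
    hB.det_pos.ne'.isUnit Y α]
  have hpos := hB.dotProduct_mulVec_pos (sub_ne_zero.mpr hα)
  rw [star_trivial] at hpos
  linarith

end WeightedLeastSquares

theorem injective_mulVec_of_posDef_transpose_mul_self {m n : Type*} [Fintype m] [Fintype n]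
    [DecidableEq m] {Z : Matrix n m ℝ} (hZ : (Zᵀ * Z).PosDef) : Function.Injective Z.mulVec := by
  refine Function.Injective.of_comp (f := Zᵀ.mulVec) ?_
  simpa only [Function.comp_def, mulVec_mulVec] using mulVec_injective_iff_isUnit.mpr hZ.isUnit

section Projection

variable {n : Type*} [Fintype n] {P : Matrix n n ℝ}

theorem dotProduct_mulVec_eq_of_isIdempotentElem (hPsymm : Pᵀ = P) (hP : IsIdempotentElem P)
    (v : n → ℝ) : v ⬝ᵥ P *ᵥ v = (P *ᵥ v) ⬝ᵥ (P *ᵥ v) := by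
  calc v ⬝ᵥ P *ᵥ v = v ⬝ᵥ (Pᵀ * P) *ᵥ v := by rw [hPsymm, hP.eq]
    _ = (P *ᵥ v) ⬝ᵥ (P *ᵥ v) := by rw [← mulVec_mulVec, dotProduct_transpose_mulVec]

variable [DecidableEq n]

theorem dotProduct_one_sub_smul_one_sub_mulVec (hPsymm : Pᵀ = P) (hP : IsIdempotentElem P)
    (κ : ℝ) (v : n → ℝ) :
    v ⬝ᵥ (1 - κ • (1 - P)) *ᵥ v = (1 - κ) * (v ⬝ᵥ v) + κ * ((P *ᵥ v) ⬝ᵥ (P *ᵥ v)) := by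
  rw [← dotProduct_mulVec_eq_of_isIdempotentElem hPsymm hP]
  simp only [sub_mulVec, one_mulVec, smul_mulVec, dotProduct_sub, dotProduct_smul, smul_eq_mul]
  ring

theorem posDef_one_sub_smul_one_sub (hPsymm : Pᵀ = P) (hP : IsIdempotentElem P) {κ : ℝ}
    (hκ : κ < 1) : (1 - κ • (1 - P)).PosDef := by
  refine PosDef.of_dotProduct_mulVec_pos ?_ fun v hv => ?_
  · simp [IsHermitian, transpose_sub, transpose_smul, hPsymm]
  have hQsymm : (1 - P)ᵀ = 1 - P := by rw [transpose_sub, transpose_one, hPsymm]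
  have hsplit : v ⬝ᵥ (1 - κ • (1 - P)) *ᵥ v =
      (P *ᵥ v) ⬝ᵥ (P *ᵥ v) + (1 - κ) * (((1 - P) *ᵥ v) ⬝ᵥ ((1 - P) *ᵥ v)) := by
    rw [← dotProduct_mulVec_eq_of_isIdempotentElem hPsymm hP,
      ← dotProduct_mulVec_eq_of_isIdempotentElem hQsymm hP.one_sub]
    simp only [sub_mulVec, one_mulVec, smul_mulVec, dotProduct_sub, dotProduct_smul, smul_eq_mul]
    ring
  rw [star_trivial, hsplit]
  have hPv := dotProduct_star_self_nonneg (P *ᵥ v)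
  have hQv := dotProduct_star_self_nonneg ((1 - P) *ᵥ v)
  rw [star_trivial] at hPv hQv
  by_contra hle
  have hP0 : P *ᵥ v = 0 := dotProduct_self_eq_zero.mp (by nlinarith)
  have hQ0 : (1 - P) *ᵥ v = 0 := dotProduct_self_eq_zero.mp (by nlinarith)
  rw [sub_mulVec, one_mulVec, hP0, sub_zero] at hQ0
  exact hv hQ0

end Projection

/-- The K-class estimator `(Zᵀ(I - κ P_A^⊥)Z)⁻¹ Zᵀ(I - κ P_A^⊥) Y`, with
`P_A^⊥ = I - P_A`, is the unique minimizer of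
`α ↦ (1-κ)‖Y - Zα‖² + κ‖P_A(Y - Zα)‖²` for `κ < 1`. -/
theorem kclass_estimator_unique_minimizer {n k : ℕ} (Z : Matrix (Fin n) (Fin k) ℝ)
    (Y : Fin n → ℝ) (PA : Matrix (Fin n) (Fin n) ℝ)
    (hPsymm : PAᵀ = PA) (hPidem : PA * PA = PA)
    (hZ : (Zᵀ * Z).PosDef) (κ : ℝ) (hκ : κ < 1) :
    let f : (Fin k → ℝ) → ℝ := fun α =>
      (1 - κ) * ((Y - Z.mulVec α) ⬝ᵥ (Y - Z.mulVec α)) +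
        κ * ((PA.mulVec (Y - Z.mulVec α)) ⬝ᵥ (PA.mulVec (Y - Z.mulVec α)))
    let αhat : Fin k → ℝ := ((Zᵀ * (1 - κ • (1 - PA)) * Z)⁻¹).mulVec
      ((Zᵀ * (1 - κ • (1 - PA))).mulVec Y)
    (∀ α, f αhat ≤ f α) ∧ (∀ α, α ≠ αhat → f αhat < f α) := by
  intro f αhat
  have hf : f = weightedSSR (1 - κ • (1 - PA)) Z Y := by
    funext α
    exact (dotProduct_one_sub_smul_one_sub_mulVec hPsymm hPidem κ _).symm
  have hlt : ∀ α, α ≠ αhat → f αhat < f α := fun α hα => by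
    rw [hf]
    exact weightedSSR_wlsEstimator_lt (posDef_one_sub_smul_one_sub hPsymm hPidem hκ)
      (injective_mulVec_of_posDef_transpose_mul_self hZ) Y hα
  refine ⟨fun α => ?_, hlt⟩
  rcases eq_or_ne α αhat with rfl | hα
  · exact le_rfl
  · exact (hlt α hα).le
end

section
/- In the setting of the previous statement, if additionally l_OLS(α̂(λ)) > 0 for all λ ≥ 0, then the test-statistic map λ ↦ n·l_IV(α̂(λ)) / l_OLS(α̂(λ)) is monotonically non-increasing on [0,∞). -/
open Matrix

/-- Monotonicity of the test statistic: if moreover `l_OLS(α̂(λ)) > 0` for all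
`λ ≥ 0`, then `λ ↦ n·l_IV(α̂(λ))/l_OLS(α̂(λ))` is non-increasing on `[0,∞)`. -/
theorem kclass_path_test_statistic_monotone {n k : ℕ} (Z : Matrix (Fin n) (Fin k) ℝ)
    (Y : Fin n → ℝ) (PA : Matrix (Fin n) (Fin n) ℝ)
    (hPsymm : PAᵀ = PA) (hPidem : PA * PA = PA)
    (hZ : (Zᵀ * Z).PosDef)
    (lOLS lIV : (Fin k → ℝ) → ℝ)
    (hOLS : ∀ α, lOLS α = (Y - Z.mulVec α) ⬝ᵥ (Y - Z.mulVec α))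
    (hIV : ∀ α, lIV α = (PA.mulVec (Y - Z.mulVec α)) ⬝ᵥ (PA.mulVec (Y - Z.mulVec α)))
    (αhat : ℝ → (Fin k → ℝ))
    (hmin : ∀ lam : ℝ, 0 ≤ lam →
      ∀ α, lOLS (αhat lam) + lam * lIV (αhat lam) ≤ lOLS α + lam * lIV α)
    (hpos : ∀ lam : ℝ, 0 ≤ lam → 0 < lOLS (αhat lam)) :
    ∀ lam1 lam2 : ℝ, 0 ≤ lam1 → lam1 ≤ lam2 →
      (n : ℝ) * lIV (αhat lam2) / lOLS (αhat lam2)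
        ≤ (n : ℝ) * lIV (αhat lam1) / lOLS (αhat lam1) := by
  intro lam1 lam2 h1 h12
  rcases eq_or_lt_of_le h12 with rfl | hlt
  · exact le_refl _
  · have h2 : (0:ℝ) ≤ lam2 := h1.trans h12
    have hA := hmin lam1 h1 (αhat lam2)
    have hB := hmin lam2 h2 (αhat lam1)
    have hb2nn : 0 ≤ lIV (αhat lam2) := by
      rw [hIV]
      exact Finset.sum_nonneg fun i _ => mul_self_nonneg _
    have hb : lIV (αhat lam2) ≤ lIV (αhat lam1) := by nlinarith
    have hb1nn : 0 ≤ lIV (αhat lam1) := hb2nn.trans hb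
    have ha : lOLS (αhat lam1) ≤ lOLS (αhat lam2) := by nlinarith
    have hp1 := hpos lam1 h1
    exact div_le_div₀ (by positivity) (by nlinarith) hp1 ha
end

section
/- Let λ ≥ 0 and let α̂_K(λ) be the unique minimizer of α ↦ l_OLS(α) + λ·l_IV(α). Set t(λ) := l_IV(α̂_K(λ)) and assume t(λ) > inf_α l_IV(α). Then α̂_K(λ) is the unique solution of the constrained problem: minimize l_OLS(α) subject to l_IV(α) ≤ t(λ), and strong duality holds between this primal problem and its Lagrangian dual. -/
/-!
`αK` minimizes the Lagrangian `l_OLS + λ·(l_IV - t)` with `t = l_IV(αK)`, so Lagrangian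
sufficiency gives primal optimality (on the feasible set the penalty is `≤ 0`) and shows that
the dual function at `γ = λ` equals `l_OLS(αK)`; weak duality is evaluation at `αK`.
A second feasible `α` with `l_OLS(α) ≤ l_OLS(αK)` would also minimize `l_OLS + λ·l_IV`, which is
strictly convex because `Zᵀ Z > 0` makes `α ↦ Y - Z α` injective.
-/

open Matrix Set Function

section DotProduct

variable {ι : Type*} [Fintype ι]

lemma dotProduct_self_nonneg (v : ι → ℝ) : 0 ≤ v ⬝ᵥ v :=
  Fintype.sum_nonneg fun i => mul_self_nonneg (v i)

lemma dotProduct_self_combo {R : Type*} [CommRing R] (u v : ι → R) {a b : R} (hab : a + b = 1) :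
    (a • u + b • v) ⬝ᵥ (a • u + b • v) =
      a * (u ⬝ᵥ u) + b * (v ⬝ᵥ v) - a * b * ((u - v) ⬝ᵥ (u - v)) := by
  obtain rfl : b = 1 - a := eq_sub_of_add_eq' hab
  simp only [dotProduct, Pi.add_apply, Pi.sub_apply, Pi.smul_apply, smul_eq_mul, Finset.mul_sum,
    ← Finset.sum_add_distrib, ← Finset.sum_sub_distrib]
  exact Finset.sum_congr rfl fun i _ => by ring

lemma strictConvexOn_dotProduct_self : StrictConvexOn ℝ univ fun v : ι → ℝ => v ⬝ᵥ v := by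
  refine ⟨convex_univ, fun u _ v _ huv a b ha hb hab => ?_⟩
  have hpos : 0 < (u - v) ⬝ᵥ (u - v) :=
    (dotProduct_self_nonneg _).lt_of_ne' (dotProduct_self_eq_zero.not.mpr (sub_ne_zero.mpr huv))
  dsimp only
  rw [dotProduct_self_combo u v hab, smul_eq_mul, smul_eq_mul]
  nlinarith [mul_pos (mul_pos ha hb) hpos]

end DotProduct

theorem StrictConvexOn.comp_affineMap {𝕜 E F β : Type*} [Field 𝕜] [LinearOrder 𝕜]
    [AddCommGroup E] [AddCommGroup F] [Module 𝕜 E] [Module 𝕜 F] [AddCommMonoid β]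
    [PartialOrder β] [SMul 𝕜 β] {f : F → β} (g : E →ᵃ[𝕜] F) (hg : Injective g) {s : Set F}
    (hf : StrictConvexOn 𝕜 s f) : StrictConvexOn 𝕜 (g ⁻¹' s) (f ∘ g) :=
  ⟨hf.1.affine_preimage _, fun x hx y hy hxy a b ha hb hab =>
    calc
      (f ∘ g) (a • x + b • y) = f (a • g x + b • g y) :=
        congrArg f (Convex.combo_affine_apply hab)
      _ < a • f (g x) + b • f (g y) := hf.2 hx hy (hg.ne hxy) ha hb hab⟩

namespace AffineMap

variable {ι E : Type*} [Fintype ι] [AddCommGroup E] [Module ℝ E] (A : E →ᵃ[ℝ] (ι → ℝ))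

lemma convexOn_dotProduct_self : ConvexOn ℝ univ fun x => A x ⬝ᵥ A x :=
  preimage_univ (f := A) ▸ strictConvexOn_dotProduct_self.convexOn.comp_affineMap A

lemma strictConvexOn_dotProduct_self (hA : Injective A) :
    StrictConvexOn ℝ univ fun x => A x ⬝ᵥ A x :=
  preimage_univ (f := A) ▸ _root_.strictConvexOn_dotProduct_self.comp_affineMap A hA

end AffineMap

namespace Matrix

variable {m n R : Type*} [Fintype n] [CommRing R]

lemma mulVec_injective_of_posDef_mul [Fintype m] [PartialOrder R] [StarRing R] {A : Matrix n m R}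
    {Z : Matrix m n R} (hAZ : (A * Z).PosDef) : Injective Z.mulVec := by
  intro x y hxy
  by_contra hne
  have := hAZ.dotProduct_mulVec_pos (sub_ne_zero.mpr hne)
  rw [← mulVec_mulVec, mulVec_sub, hxy, sub_self, mulVec_zero, dotProduct_zero] at this
  exact lt_irrefl _ this

def residual (Z : Matrix m n R) (y : m → R) : (n → R) →ᵃ[R] (m → R) :=
  AffineMap.const R (n → R) y - Z.mulVecLin.toAffineMap

lemma residual_injective {Z : Matrix m n R} (hZ : Injective Z.mulVec) (y : m → R) :
    Injective (Z.residual y) :=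
  fun _ _ h => hZ (sub_right_injective h)

end Matrix

section Lagrangian

variable {E : Type*} {f g : E → ℝ} {lam : ℝ} {x₀ : E}

lemma le_of_lagrangian_min (hlam : 0 ≤ lam) (hmin : ∀ x, f x₀ + lam * g x₀ ≤ f x + lam * g x)
    {x : E} (hx : g x ≤ g x₀) : f x₀ ≤ f x := by
  nlinarith [hmin x]

lemma eq_of_lagrangian_min [AddCommGroup E] [Module ℝ E] (hf : StrictConvexOn ℝ univ f)
    (hg : ConvexOn ℝ univ g) (hlam : 0 ≤ lam) (hmin : ∀ x, f x₀ + lam * g x₀ ≤ f x + lam * g x)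
    {x : E} (hgx : g x ≤ g x₀) (hfx : f x ≤ f x₀) : x = x₀ := by
  have hL : StrictConvexOn ℝ univ fun x => f x + lam * g x := hf.add_convexOn (hg.smul hlam)
  refine hL.eq_of_isMinOn (fun y _ => ?_) (fun y _ => hmin y) trivial trivial
  show f x + lam * g x ≤ f y + lam * g y
  nlinarith [hmin y]

lemma sInf_lagrangian_eq (hmin : ∀ x, f x₀ + lam * g x₀ ≤ f x + lam * g x) :
    sInf (range fun x => f x + lam * (g x - g x₀)) = f x₀ :=
  IsLeast.csInf_eq ⟨⟨x₀, by simp⟩, by rintro _ ⟨x, rfl⟩; linarith [hmin x]⟩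

lemma bddBelow_range_lagrangian (hf : ∀ x, 0 ≤ f x) (hg : ∀ x, 0 ≤ g x) (hlam : 0 ≤ lam)
    (t : ℝ) : BddBelow (range fun x => f x + lam * (g x - t)) :=
  ⟨-(lam * t), by rintro _ ⟨x, rfl⟩; nlinarith [hf x, hg x]⟩

end Lagrangian

theorem kclass_solves_primal_strong_duality_general {n k : ℕ} (Z : Matrix (Fin n) (Fin k) ℝ)
    (Y : Fin n → ℝ) (PA : Matrix (Fin n) (Fin n) ℝ)
    (hZ : (Zᵀ * Z).PosDef)
    (lOLS lIV : (Fin k → ℝ) → ℝ)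
    (hOLS : ∀ α, lOLS α = (Y - Z.mulVec α) ⬝ᵥ (Y - Z.mulVec α))
    (hIV : ∀ α, lIV α = (PA.mulVec (Y - Z.mulVec α)) ⬝ᵥ (PA.mulVec (Y - Z.mulVec α)))
    (lam : ℝ) (hlam : 0 ≤ lam) (αK : Fin k → ℝ)
    (hKmin : ∀ α, lOLS αK + lam * lIV αK ≤ lOLS α + lam * lIV α) :
    (∀ α, lIV α ≤ lIV αK → lOLS αK ≤ lOLS α) ∧
      (∀ α, lIV α ≤ lIV αK → lOLS α ≤ lOLS αK → α = αK) ∧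
      (∀ γ : ℝ, 0 ≤ γ →
        sInf (Set.range fun α => lOLS α + γ * (lIV α - lIV αK)) ≤ lOLS αK) ∧
      (∃ γ : ℝ, 0 ≤ γ ∧
        sInf (Set.range fun α => lOLS α + γ * (lIV α - lIV αK)) = lOLS αK) := by
  have hOLS_convex : StrictConvexOn ℝ univ lOLS := by
    rw [funext hOLS]
    exact (Z.residual Y).strictConvexOn_dotProduct_self
      (residual_injective (mulVec_injective_of_posDef_mul hZ) Y)
  have hIV_convex : ConvexOn ℝ univ lIV := by
    rw [funext hIV]
    exact (PA.mulVecLin.toAffineMap.comp (Z.residual Y)).convexOn_dotProduct_self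
  refine ⟨fun _ => le_of_lagrangian_min hlam hKmin,
    fun _ => eq_of_lagrangian_min hOLS_convex hIV_convex hlam hKmin,
    fun γ hγ => ?_, ⟨lam, hlam, sInf_lagrangian_eq hKmin⟩⟩
  have hbdd := bddBelow_range_lagrangian (fun α => hOLS α ▸ dotProduct_self_nonneg _)
    (fun α => hIV α ▸ dotProduct_self_nonneg _) hγ (lIV αK)
  simpa using csInf_le hbdd ⟨αK, rfl⟩

/-- Connecting the dual and the primal: if `α̂_K` minimizes `l_OLS + λ·l_IV` and
`t := l_IV(α̂_K) > inf l_IV`, then `α̂_K` is the unique solution of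
"minimize `l_OLS` subject to `l_IV ≤ t`", and strong duality holds (the
Lagrangian dual value is attained and equals the primal optimal value). -/
theorem kclass_solves_primal_strong_duality {n k : ℕ} (Z : Matrix (Fin n) (Fin k) ℝ)
    (Y : Fin n → ℝ) (PA : Matrix (Fin n) (Fin n) ℝ)
    (hPsymm : PAᵀ = PA) (hPidem : PA * PA = PA)
    (hZ : (Zᵀ * Z).PosDef)
    (lOLS lIV : (Fin k → ℝ) → ℝ)
    (hOLS : ∀ α, lOLS α = (Y - Z.mulVec α) ⬝ᵥ (Y - Z.mulVec α))
    (hIV : ∀ α, lIV α = (PA.mulVec (Y - Z.mulVec α)) ⬝ᵥ (PA.mulVec (Y - Z.mulVec α)))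
    (lam : ℝ) (hlam : 0 ≤ lam) (αK : Fin k → ℝ)
    (hKmin : ∀ α, lOLS αK + lam * lIV αK ≤ lOLS α + lam * lIV α)
    (ht : sInf (Set.range lIV) < lIV αK) :
    (∀ α, lIV α ≤ lIV αK → lOLS αK ≤ lOLS α) ∧
      (∀ α, lIV α ≤ lIV αK → lOLS α ≤ lOLS αK → α = αK) ∧
      (∀ γ : ℝ, 0 ≤ γ →
        sInf (Set.range fun α => lOLS α + γ * (lIV α - lIV αK)) ≤ lOLS αK) ∧
      (∃ γ : ℝ, 0 ≤ γ ∧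
        sInf (Set.range fun α => lOLS α + γ * (lIV α - lIV αK)) = lOLS αK) :=
  kclass_solves_primal_strong_duality_general Z Y PA hZ lOLS lIV hOLS hIV lam hlam αK hKmin
end

section
/- For t in the interval D = (inf_α l_IV(α), l_IV(α̂_OLS)], let α̂_Pr(t) denote the unique solution of: minimize l_OLS(α) subject to l_IV(α) ≤ t, and for each such t let λ̃(t) ≥ 0 be the corresponding Lagrange dual optimum. If the constraint is active at every solution (l_IV(α̂_Pr(t)) = t for all t ∈ D), then the map t ↦ λ̃(t) is strictly decreasing on D. -/
/-!
Adding the Lagrangian optimality inequalities at `t₁ < t₂`, with the constraint active at both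
solutions, gives `(λ̃(t₁) - λ̃(t₂)) (t₂ - t₁) ≥ 0`. If `λ̃(t₁) = λ̃(t₂) = λ`, both `α̂_Pr(t₁)` and
`α̂_Pr(t₂)` minimize `l_OLS + λ l_IV`, which is strictly convex because `Zᵀ Z` is positive definite;
hence they coincide, contradicting `l_IV(α̂_Pr(tᵢ)) = tᵢ`.
-/

open Matrix Set

section ResidualSq

variable {m ι : Type*} [Fintype ι]

lemma dotProduct_self_combo_of_add_eq_one [Fintype m] (u v : m → ℝ) {a b : ℝ}
    (hab : a + b = 1) :
    (a • u + b • v) ⬝ᵥ (a • u + b • v) =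
      a * (u ⬝ᵥ u) + b * (v ⬝ᵥ v) - a * b * ((u - v) ⬝ᵥ (u - v)) := by
  obtain rfl : b = 1 - a := by linarith
  simp only [add_dotProduct, dotProduct_add, sub_dotProduct, dotProduct_sub, smul_dotProduct,
    dotProduct_smul, dotProduct_comm v u, smul_eq_mul]
  ring

lemma sub_mulVec_combo_of_add_eq_one (c : m → ℝ) (M : Matrix m ι ℝ) (x y : ι → ℝ) {a b : ℝ}
    (hab : a + b = 1) :
    c - M *ᵥ (a • x + b • y) = a • (c - M *ᵥ x) + b • (c - M *ᵥ y) := by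
  conv_lhs => rw [← one_smul ℝ c, ← hab, add_smul]
  rw [mulVec_add, mulVec_smul, mulVec_smul, smul_sub, smul_sub]
  abel

lemma residual_sq_combo_of_add_eq_one [Fintype m] (c : m → ℝ) (M : Matrix m ι ℝ) (x y : ι → ℝ)
    {a b : ℝ} (hab : a + b = 1) :
    (c - M *ᵥ (a • x + b • y)) ⬝ᵥ (c - M *ᵥ (a • x + b • y)) =
      a * ((c - M *ᵥ x) ⬝ᵥ (c - M *ᵥ x)) + b * ((c - M *ᵥ y) ⬝ᵥ (c - M *ᵥ y)) -
        a * b * ((M *ᵥ (y - x)) ⬝ᵥ (M *ᵥ (y - x))) := by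
  have hdiff : (c - M *ᵥ x) - (c - M *ᵥ y) = M *ᵥ (y - x) := by
    rw [mulVec_sub]; abel
  rw [sub_mulVec_combo_of_add_eq_one c M x y hab, dotProduct_self_combo_of_add_eq_one _ _ hab,
    hdiff]

lemma convexOn_residual_sq [Fintype m] (c : m → ℝ) (M : Matrix m ι ℝ) :
    ConvexOn ℝ univ fun x => (c - M *ᵥ x) ⬝ᵥ (c - M *ᵥ x) := by
  refine ⟨convex_univ, fun x _ y _ a b ha hb hab => ?_⟩
  dsimp only
  rw [residual_sq_combo_of_add_eq_one c M x y hab, smul_eq_mul, smul_eq_mul]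
  have hsq : 0 ≤ (M *ᵥ (y - x)) ⬝ᵥ (M *ᵥ (y - x)) := by
    simpa only [star_trivial] using dotProduct_self_star_nonneg (M *ᵥ (y - x))
  have := mul_nonneg (mul_nonneg ha hb) hsq
  linarith

lemma dotProduct_mulVec_self_pos [Fintype m] {M : Matrix m ι ℝ} (hM : (Mᵀ * M).PosDef)
    {x : ι → ℝ} (hx : x ≠ 0) : 0 < (M *ᵥ x) ⬝ᵥ (M *ᵥ x) := by
  have h := hM.dotProduct_mulVec_pos hx
  rwa [star_trivial, ← mulVec_mulVec, dotProduct_mulVec, vecMul_transpose] at h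

lemma strictConvexOn_residual_sq [Fintype m] (c : m → ℝ) {M : Matrix m ι ℝ}
    (hM : (Mᵀ * M).PosDef) :
    StrictConvexOn ℝ univ fun x => (c - M *ᵥ x) ⬝ᵥ (c - M *ᵥ x) := by
  refine ⟨convex_univ, fun x _ y _ hxy a b ha hb hab => ?_⟩
  dsimp only
  rw [residual_sq_combo_of_add_eq_one c M x y hab, smul_eq_mul, smul_eq_mul]
  have := mul_pos (mul_pos ha hb) (dotProduct_mulVec_self_pos hM (sub_ne_zero.mpr hxy.symm))
  linarith

end ResidualSq

section LagrangeMultiplier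

variable {E : Type*} {f g : E → ℝ} {x₁ x₂ : E} {μ₁ μ₂ : ℝ}

lemma multiplier_le_of_lagrangian_min (h₁ : ∀ a, f x₁ + μ₁ * g x₁ ≤ f a + μ₁ * g a)
    (h₂ : ∀ a, f x₂ + μ₂ * g x₂ ≤ f a + μ₂ * g a) (hg : g x₁ < g x₂) : μ₂ ≤ μ₁ := by
  nlinarith [h₁ x₂, h₂ x₁]

lemma multiplier_lt_of_lagrangian_min [AddCommMonoid E] [Module ℝ E]
    (h₁ : ∀ a, f x₁ + μ₁ * g x₁ ≤ f a + μ₁ * g a) (h₂ : ∀ a, f x₂ + μ₂ * g x₂ ≤ f a + μ₂ * g a)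
    (hg : g x₁ < g x₂) (hconv : StrictConvexOn ℝ univ fun a => f a + μ₁ * g a) : μ₂ < μ₁ := by
  refine (multiplier_le_of_lagrangian_min h₁ h₂ hg).lt_of_ne fun hμ => hg.ne ?_
  subst hμ
  exact congrArg g <| hconv.eq_of_isMinOn (isMinOn_univ_iff.mpr h₁) (isMinOn_univ_iff.mpr h₂)
    (mem_univ _) (mem_univ _)

end LagrangeMultiplier

theorem dual_parameter_strictAnti_general {n k : ℕ} (Z : Matrix (Fin n) (Fin k) ℝ)
    (Y : Fin n → ℝ) (PA : Matrix (Fin n) (Fin n) ℝ)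
    (hZ : (Zᵀ * Z).PosDef)
    (lOLS lIV : (Fin k → ℝ) → ℝ)
    (hOLS : ∀ α, lOLS α = (Y - Z.mulVec α) ⬝ᵥ (Y - Z.mulVec α))
    (hIV : ∀ α, lIV α = (PA.mulVec (Y - Z.mulVec α)) ⬝ᵥ (PA.mulVec (Y - Z.mulVec α)))
    (D : Set ℝ)
    (αPr : ℝ → (Fin k → ℝ)) (lamt : ℝ → ℝ)
    (hlampos : ∀ t ∈ D, 0 ≤ lamt t)
    (hlag : ∀ t ∈ D, ∀ α,
      lOLS (αPr t) + lamt t * lIV (αPr t) ≤ lOLS α + lamt t * lIV α)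
    (hactive : ∀ t ∈ D, lIV (αPr t) = t) :
    ∀ t1 ∈ D, ∀ t2 ∈ D, t1 < t2 → lamt t2 < lamt t1 := by
  intro t1 ht1 t2 ht2 hlt
  have hOLS' : lOLS = fun α => (Y - Z *ᵥ α) ⬝ᵥ (Y - Z *ᵥ α) := funext hOLS
  have hIV' : lIV = fun α => (PA *ᵥ Y - (PA * Z) *ᵥ α) ⬝ᵥ (PA *ᵥ Y - (PA * Z) *ᵥ α) :=
    funext fun α => by rw [hIV, mulVec_sub, mulVec_mulVec]
  refine multiplier_lt_of_lagrangian_min (hlag t1 ht1) (hlag t2 ht2)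
    (by rwa [hactive t1 ht1, hactive t2 ht2]) ?_
  rw [hOLS', hIV']
  exact (strictConvexOn_residual_sq Y hZ).add_convexOn
    ((convexOn_residual_sq (PA *ᵥ Y) (PA * Z)).smul (hlampos t1 ht1))

/-- The dual parameter as a function of the primal constraint bound is strictly
decreasing on `D = (inf l_IV, l_IV(α̂_OLS)]`, provided the constraint is active
at every primal solution. -/
theorem dual_parameter_strictAnti {n k : ℕ} (Z : Matrix (Fin n) (Fin k) ℝ)
    (Y : Fin n → ℝ) (PA : Matrix (Fin n) (Fin n) ℝ)
    (hPsymm : PAᵀ = PA) (hPidem : PA * PA = PA)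
    (hZ : (Zᵀ * Z).PosDef)
    (lOLS lIV : (Fin k → ℝ) → ℝ)
    (hOLS : ∀ α, lOLS α = (Y - Z.mulVec α) ⬝ᵥ (Y - Z.mulVec α))
    (hIV : ∀ α, lIV α = (PA.mulVec (Y - Z.mulVec α)) ⬝ᵥ (PA.mulVec (Y - Z.mulVec α)))
    (αOLS : Fin k → ℝ) (hOLSmin : ∀ α, lOLS αOLS ≤ lOLS α)
    (D : Set ℝ) (hD : D = Set.Ioc (sInf (Set.range lIV)) (lIV αOLS))
    (αPr : ℝ → (Fin k → ℝ)) (lamt : ℝ → ℝ)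
    (hfeas : ∀ t ∈ D, lIV (αPr t) ≤ t)
    (hPrmin : ∀ t ∈ D, ∀ α, lIV α ≤ t → lOLS (αPr t) ≤ lOLS α)
    (hlampos : ∀ t ∈ D, 0 ≤ lamt t)
    (hlag : ∀ t ∈ D, ∀ α,
      lOLS (αPr t) + lamt t * lIV (αPr t) ≤ lOLS α + lamt t * lIV α)
    (hactive : ∀ t ∈ D, lIV (αPr t) = t) :
    ∀ t1 ∈ D, ∀ t2 ∈ D, t1 < t2 → lamt t2 < lamt t1 :=
  dual_parameter_strictAnti_general Z Y PA hZ lOLS lIV hOLS hIV D αPr lamt hlampos hlag hactive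
end

section
/- Let A, ε be independent random vectors (A ∈ ℝ^q, E[ε] = 0, finite second moments, E[AA^T] ≻ 0), and let R_v = ξ^T v + w^T ε denote the residual under an intervention replacing A by a random vector v with Cov(v, ε) = 0. Fix κ ∈ [0,1) and let C(κ) = {v : Cov(v,ε) = 0, E[vv^T] ⪯ (1/(1-κ))·E[AA^T]}. Then sup_{v ∈ C(κ)} E[(ξ^T v)²] = (1/(1-κ))·E[(ξ^T A)²], and consequently sup_{v ∈ C(κ)} E[R_v²] = E[(w^T ε)²] + (1/(1-κ))·E[(ξ^T A)²]. -/
/-!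
Only second moments matter: for square-integrable `v`, `E[(ξᵀv)²] = ξᵀ E[vvᵀ] ξ`, so the Loewner
bound `E[vvᵀ] ⪯ c E[AAᵀ]` with `c = 1/(1-κ)` gives `E[(ξᵀv)²] ≤ c E[(ξᵀA)²]`, and `v = √c A`
attains it; independence and `E[ε] = 0` make `√c A` uncorrelated with `ε`. For the residual, the
cross term `2 E[(ξᵀv)(wᵀε)] = 2 ξᵀ E[vεᵀ] w` vanishes, so its second moment splits as
`E[(ξᵀv)²] + E[(wᵀε)²]`.
-/

open Matrix MeasureTheory ProbabilityTheory

lemma dotProduct_mulVec_le_of_posSemidef_sub {n : Type*} [Fintype n]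
    {M N : Matrix n n ℝ} (h : (N - M).PosSemidef) (ξ : n → ℝ) :
    ξ ⬝ᵥ (M *ᵥ ξ) ≤ ξ ⬝ᵥ (N *ᵥ ξ) := by
  have := h.dotProduct_mulVec_nonneg ξ
  rw [star_trivial, sub_mulVec, dotProduct_sub] at this
  linarith

section SecondMoments

variable {Ω ι ι' : Type*} [MeasurableSpace Ω] {μ : Measure Ω}

noncomputable def crossMoment (μ : Measure Ω) (u : Ω → ι → ℝ) (v : Ω → ι' → ℝ) :
    Matrix ι ι' ℝ :=
  Matrix.of fun i j => ∫ ω, u ω i * v ω j ∂μ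

lemma crossMoment_eq_zero_iff {u : Ω → ι → ℝ} {v : Ω → ι' → ℝ} :
    crossMoment μ u v = 0 ↔ ∀ i j, ∫ ω, u ω i * v ω j ∂μ = 0 := by
  simp only [← Matrix.ext_iff, crossMoment, of_apply, Matrix.zero_apply]

lemma crossMoment_smul_left (t : ℝ) (u : Ω → ι → ℝ) (v : Ω → ι' → ℝ) :
    crossMoment μ (fun ω => t • u ω) v = t • crossMoment μ u v := by
  ext i j
  simp only [crossMoment, of_apply, Matrix.smul_apply, Pi.smul_apply, smul_eq_mul,
    mul_assoc, integral_const_mul]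

lemma crossMoment_smul_right (t : ℝ) (u : Ω → ι → ℝ) (v : Ω → ι' → ℝ) :
    crossMoment μ u (fun ω => t • v ω) = t • crossMoment μ u v := by
  ext i j
  simp only [crossMoment, of_apply, Matrix.smul_apply, Pi.smul_apply, smul_eq_mul,
    mul_left_comm _ t, integral_const_mul]

lemma crossMoment_eq_zero_of_indepFun {u : Ω → ι → ℝ} {v : Ω → ι' → ℝ}
    (huv : IndepFun u v μ) (hu : ∀ i, AEStronglyMeasurable (fun ω => u ω i) μ)
    (hv : ∀ j, AEStronglyMeasurable (fun ω => v ω j) μ) (hv0 : ∀ j, ∫ ω, v ω j ∂μ = 0) :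
    crossMoment μ u v = 0 := by
  refine crossMoment_eq_zero_iff.2 fun i j => ?_
  have hij := (huv.comp (measurable_pi_apply i) (measurable_pi_apply j))
    |>.integral_mul_eq_mul_integral (hu i) (hv j)
  simpa [hv0 j] using hij

variable [Fintype ι] [Fintype ι']

lemma memLp_dotProduct {v : Ω → ι → ℝ} (hv : ∀ i, MemLp (fun ω => v ω i) 2 μ) (ξ : ι → ℝ) :
    MemLp (fun ω => ξ ⬝ᵥ v ω) 2 μ :=
  memLp_finsetSum _ fun i _ => (hv i).const_mul (ξ i)

lemma integral_dotProduct_mul_dotProduct {u : Ω → ι → ℝ} {v : Ω → ι' → ℝ}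
    (hu : ∀ i, MemLp (fun ω => u ω i) 2 μ) (hv : ∀ j, MemLp (fun ω => v ω j) 2 μ)
    (ξ : ι → ℝ) (η : ι' → ℝ) :
    ∫ ω, (ξ ⬝ᵥ u ω) * (η ⬝ᵥ v ω) ∂μ = ξ ⬝ᵥ (crossMoment μ u v *ᵥ η) := by
  have hint : ∀ i j, Integrable (fun ω => ξ i * (u ω i * v ω j * η j)) μ := fun i j =>
    (((hu i).integrable_mul (hv j)).mul_const (η j)).const_mul (ξ i)
  have hexpand : ∀ ω, (ξ ⬝ᵥ u ω) * (η ⬝ᵥ v ω) = ∑ i, ∑ j, ξ i * (u ω i * v ω j * η j) := by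
    intro ω
    simp only [dotProduct, Finset.sum_mul_sum]
    exact Finset.sum_congr rfl fun i _ => Finset.sum_congr rfl fun j _ => by ring
  rw [integral_congr_ae (Filter.Eventually.of_forall hexpand)]
  simp only [dotProduct, mulVec, crossMoment, of_apply, Finset.mul_sum]
  rw [integral_finsetSum _ fun i _ => integrable_finsetSum _ fun j _ => hint i j]
  refine Finset.sum_congr rfl fun i _ => ?_
  rw [integral_finsetSum _ fun j _ => hint i j]
  simp only [integral_const_mul, integral_mul_const]

lemma integral_dotProduct_sq {v : Ω → ι → ℝ} (hv : ∀ i, MemLp (fun ω => v ω i) 2 μ)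
    (ξ : ι → ℝ) : ∫ ω, (ξ ⬝ᵥ v ω) ^ 2 ∂μ = ξ ⬝ᵥ (crossMoment μ v v *ᵥ ξ) := by
  simp only [sq, integral_dotProduct_mul_dotProduct hv hv]

lemma integral_add_sq_of_crossMoment_eq_zero {u : Ω → ι → ℝ} {v : Ω → ι' → ℝ}
    (hu : ∀ i, MemLp (fun ω => u ω i) 2 μ) (hv : ∀ j, MemLp (fun ω => v ω j) 2 μ)
    (huv : crossMoment μ u v = 0) (ξ : ι → ℝ) (η : ι' → ℝ) :
    ∫ ω, (ξ ⬝ᵥ u ω + η ⬝ᵥ v ω) ^ 2 ∂μ =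
      (∫ ω, (ξ ⬝ᵥ u ω) ^ 2 ∂μ) + ∫ ω, (η ⬝ᵥ v ω) ^ 2 ∂μ := by
  have hξu := memLp_dotProduct hu ξ
  have hηv := memLp_dotProduct hv η
  have hsq : Integrable (fun ω => (ξ ⬝ᵥ u ω) ^ 2) μ := hξu.integrable_sq
  have hmul : Integrable (fun ω => 2 * ((ξ ⬝ᵥ u ω) * (η ⬝ᵥ v ω))) μ :=
    (hξu.integrable_mul hηv).const_mul 2
  have hsum : Integrable (fun ω => (ξ ⬝ᵥ u ω) ^ 2 + 2 * ((ξ ⬝ᵥ u ω) * (η ⬝ᵥ v ω))) μ :=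
    hsq.add hmul
  have hcross : ∫ ω, 2 * ((ξ ⬝ᵥ u ω) * (η ⬝ᵥ v ω)) ∂μ = 0 := by
    rw [integral_const_mul, integral_dotProduct_mul_dotProduct hu hv, huv]
    simp
  calc ∫ ω, (ξ ⬝ᵥ u ω + η ⬝ᵥ v ω) ^ 2 ∂μ
      = ∫ ω, (ξ ⬝ᵥ u ω) ^ 2 + 2 * ((ξ ⬝ᵥ u ω) * (η ⬝ᵥ v ω)) + (η ⬝ᵥ v ω) ^ 2 ∂μ := by
        congr 1; ext ω; ring
    _ = (∫ ω, (ξ ⬝ᵥ u ω) ^ 2 ∂μ) + ∫ ω, (η ⬝ᵥ v ω) ^ 2 ∂μ := by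
        rw [integral_add hsum hηv.integrable_sq, integral_add hsq hmul, hcross,
          add_zero]

lemma integral_dotProduct_sq_le_of_posSemidef_sub {u v : Ω → ι → ℝ}
    (hu : ∀ i, MemLp (fun ω => u ω i) 2 μ) (hv : ∀ i, MemLp (fun ω => v ω i) 2 μ) {c : ℝ}
    (h : (c • crossMoment μ u u - crossMoment μ v v).PosSemidef) (ξ : ι → ℝ) :
    ∫ ω, (ξ ⬝ᵥ v ω) ^ 2 ∂μ ≤ c * ∫ ω, (ξ ⬝ᵥ u ω) ^ 2 ∂μ := by
  rw [integral_dotProduct_sq hu, integral_dotProduct_sq hv, ← smul_eq_mul, ← dotProduct_smul,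
    ← smul_mulVec]
  exact dotProduct_mulVec_le_of_posSemidef_sub h ξ

end SecondMoments

theorem worst_case_intervention_sup_general {Ω : Type*} [MeasurableSpace Ω]
    (μ : Measure Ω) {q m : ℕ}
    (A : Ω → (Fin q → ℝ)) (ε : Ω → (Fin m → ℝ))
    (hAmeas : Measurable A)
    (hA2 : ∀ i, MemLp (fun ω => A ω i) 2 μ)
    (hε2 : ∀ j, MemLp (fun ω => ε ω j) 2 μ)
    (hindep : IndepFun A ε μ)
    (hεmean : ∀ j, ∫ ω, ε ω j ∂μ = 0)
    (ξ : Fin q → ℝ) (w : Fin m → ℝ)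
    (κ : ℝ) (hκ1 : κ < 1) :
    (sSup {x : ℝ | ∃ v : Ω → (Fin q → ℝ), Measurable v ∧
          (∀ i, MemLp (fun ω => v ω i) 2 μ) ∧
          (∀ i j, ∫ ω, v ω i * ε ω j ∂μ = 0) ∧
          ((1 / (1 - κ)) • (Matrix.of fun i j => ∫ ω, A ω i * A ω j ∂μ) -
              (Matrix.of fun i j => ∫ ω, v ω i * v ω j ∂μ) :
            Matrix (Fin q) (Fin q) ℝ).PosSemidef ∧
          x = ∫ ω, (ξ ⬝ᵥ v ω) ^ 2 ∂μ} =
        (1 / (1 - κ)) * ∫ ω, (ξ ⬝ᵥ A ω) ^ 2 ∂μ) ∧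
      sSup {x : ℝ | ∃ v : Ω → (Fin q → ℝ), Measurable v ∧
          (∀ i, MemLp (fun ω => v ω i) 2 μ) ∧
          (∀ i j, ∫ ω, v ω i * ε ω j ∂μ = 0) ∧
          ((1 / (1 - κ)) • (Matrix.of fun i j => ∫ ω, A ω i * A ω j ∂μ) -
              (Matrix.of fun i j => ∫ ω, v ω i * v ω j ∂μ) :
            Matrix (Fin q) (Fin q) ℝ).PosSemidef ∧
          x = ∫ ω, (ξ ⬝ᵥ v ω + w ⬝ᵥ ε ω) ^ 2 ∂μ} =
        (∫ ω, (w ⬝ᵥ ε ω) ^ 2 ∂μ) + (1 / (1 - κ)) * ∫ ω, (ξ ⬝ᵥ A ω) ^ 2 ∂μ := by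
  have hc : 0 ≤ 1 / (1 - κ) := one_div_nonneg.2 (sub_nonneg.2 hκ1.le)
  set c := 1 / (1 - κ)
  set v₀ : Ω → Fin q → ℝ := fun ω => √c • A ω
  have hv₀ : ∀ i, MemLp (fun ω => v₀ ω i) 2 μ := fun i => (hA2 i).const_mul √c
  have hAε : crossMoment μ A ε = 0 := crossMoment_eq_zero_of_indepFun hindep
    (fun i => (hA2 i).aestronglyMeasurable) (fun j => (hε2 j).aestronglyMeasurable) hεmean
  have hv₀ε : crossMoment μ v₀ ε = 0 := by rw [crossMoment_smul_left, hAε, smul_zero]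
  have hv₀v₀ : crossMoment μ v₀ v₀ = c • crossMoment μ A A := by
    rw [crossMoment_smul_left, crossMoment_smul_right, smul_smul, Real.mul_self_sqrt hc]
  have hv₀A : (c • crossMoment μ A A - crossMoment μ v₀ v₀).PosSemidef := by
    rw [hv₀v₀, sub_self]
    exact .zero
  have hv₀val : ∫ ω, (ξ ⬝ᵥ v₀ ω) ^ 2 ∂μ = c * ∫ ω, (ξ ⬝ᵥ A ω) ^ 2 ∂μ := by
    rw [integral_dotProduct_sq hv₀, integral_dotProduct_sq hA2, hv₀v₀, smul_mulVec,
      dotProduct_smul, smul_eq_mul]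
  have hv₀meas : Measurable v₀ := hAmeas.const_smul √c
  have hv₀ε' := crossMoment_eq_zero_iff.1 hv₀ε
  refine ⟨IsGreatest.csSup_eq ⟨⟨v₀, hv₀meas, hv₀, hv₀ε', hv₀A, hv₀val.symm⟩, ?_⟩,
    IsGreatest.csSup_eq ⟨⟨v₀, hv₀meas, hv₀, hv₀ε', hv₀A, ?_⟩, ?_⟩⟩
  · rintro _ ⟨v, -, hv, -, hvA, rfl⟩
    exact integral_dotProduct_sq_le_of_posSemidef_sub hA2 hv hvA ξ
  · rw [integral_add_sq_of_crossMoment_eq_zero hv₀ hε2 hv₀ε, hv₀val, add_comm]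
  · rintro _ ⟨v, -, hv, hvε, hvA, rfl⟩
    rw [integral_add_sq_of_crossMoment_eq_zero hv hε2 (crossMoment_eq_zero_iff.2 hvε), add_comm]
    gcongr
    exact integral_dotProduct_sq_le_of_posSemidef_sub hA2 hv hvA ξ

/-- Worst-case intervention strength: over the class `C(κ)` of intervention
vectors `v` uncorrelated with `ε` and with `E[vvᵀ] ⪯ (1/(1-κ))E[AAᵀ]`, the
supremum of `E[(ξᵀv)²]` equals `(1/(1-κ))E[(ξᵀA)²]`, and consequently the
supremum of `E[(ξᵀv + wᵀε)²]` equals `E[(wᵀε)²] + (1/(1-κ))E[(ξᵀA)²]`. -/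
theorem worst_case_intervention_sup {Ω : Type*} [MeasurableSpace Ω]
    (μ : Measure Ω) [IsProbabilityMeasure μ] {q m : ℕ}
    (A : Ω → (Fin q → ℝ)) (ε : Ω → (Fin m → ℝ))
    (hAmeas : Measurable A) (hεmeas : Measurable ε)
    (hA2 : ∀ i, MemLp (fun ω => A ω i) 2 μ)
    (hε2 : ∀ j, MemLp (fun ω => ε ω j) 2 μ)
    (hindep : IndepFun A ε μ)
    (hεmean : ∀ j, ∫ ω, ε ω j ∂μ = 0)
    (hM : (Matrix.of fun i j => ∫ ω, A ω i * A ω j ∂μ :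
        Matrix (Fin q) (Fin q) ℝ).PosDef)
    (ξ : Fin q → ℝ) (w : Fin m → ℝ)
    (κ : ℝ) (hκ0 : 0 ≤ κ) (hκ1 : κ < 1) :
    (sSup {x : ℝ | ∃ v : Ω → (Fin q → ℝ), Measurable v ∧
          (∀ i, MemLp (fun ω => v ω i) 2 μ) ∧
          (∀ i j, ∫ ω, v ω i * ε ω j ∂μ = 0) ∧
          ((1 / (1 - κ)) • (Matrix.of fun i j => ∫ ω, A ω i * A ω j ∂μ) -
              (Matrix.of fun i j => ∫ ω, v ω i * v ω j ∂μ) :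
            Matrix (Fin q) (Fin q) ℝ).PosSemidef ∧
          x = ∫ ω, (ξ ⬝ᵥ v ω) ^ 2 ∂μ} =
        (1 / (1 - κ)) * ∫ ω, (ξ ⬝ᵥ A ω) ^ 2 ∂μ) ∧
      sSup {x : ℝ | ∃ v : Ω → (Fin q → ℝ), Measurable v ∧
          (∀ i, MemLp (fun ω => v ω i) 2 μ) ∧
          (∀ i j, ∫ ω, v ω i * ε ω j ∂μ = 0) ∧
          ((1 / (1 - κ)) • (Matrix.of fun i j => ∫ ω, A ω i * A ω j ∂μ) -
              (Matrix.of fun i j => ∫ ω, v ω i * v ω j ∂μ) :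
            Matrix (Fin q) (Fin q) ℝ).PosSemidef ∧
          x = ∫ ω, (ξ ⬝ᵥ v ω + w ⬝ᵥ ε ω) ^ 2 ∂μ} =
        (∫ ω, (w ⬝ᵥ ε ω) ^ 2 ∂μ) + (1 / (1 - κ)) * ∫ ω, (ξ ⬝ᵥ A ω) ^ 2 ∂μ :=
  worst_case_intervention_sup_general μ A ε hAmeas hA2 hε2 hindep hεmean ξ w κ hκ1
end

section
/- Let λ ↦ α̂_K(λ) = (Z^T(I + λP_A)Z)^{-1} Z^T(I + λP_A)Y be defined for λ ≥ 0, where Z^T Z is positive definite and P_A is an orthogonal projection. Then the map λ ↦ α̂_K(λ) is continuous on [0,∞), and if additionally Z^T P_A Z is positive definite then lim_{λ→∞} α̂_K(λ) = (Z^T P_A Z)^{-1} Z^T P_A Y. -/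
/-!
Writing `B = ZᵀZ`, `C = ZᵀP_AZ`, the path is `λ ↦ (B + λC)⁻¹(v + λw)`. Since `C = (P_AZ)ᵀ(P_AZ)`
is positive semidefinite, `B + λC` is positive definite for `λ ≥ 0`, so the path is continuous
there. For `λ > 0` it equals `s ↦ (C + sB)⁻¹(w + sv)` at `s = λ⁻¹`, which is continuous at `s = 0`
when `C` is invertible; letting `λ → ∞` gives the limit `C⁻¹w`.
-/

open Matrix Filter Topology

namespace Matrix

variable {m n : Type*} [Fintype m]

theorem posSemidef_transpose_mul_mul_of_isSymm_of_isIdempotentElem [Fintype n]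
    (Z : Matrix m n ℝ) {P : Matrix m m ℝ} (hPsymm : P.IsSymm) (hPidem : IsIdempotentElem P) :
    (Zᵀ * P * Z).PosSemidef := by
  have h := posSemidef_conjTranspose_mul_self (P * Z)
  rwa [conjTranspose_eq_transpose_of_trivial, transpose_mul, hPsymm, Matrix.mul_assoc,
    ← Matrix.mul_assoc P P Z, hPidem, ← Matrix.mul_assoc] at h

variable [DecidableEq m]

theorem inv_smul_of_ne_zero {K : Type*} [Field K] (A : Matrix m m K) {t : K} (ht : t ≠ 0) :
    (t • A)⁻¹ = t⁻¹ • A⁻¹ := by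
  by_cases hA : IsUnit A.det
  · have : Invertible t := invertibleOfNonzero ht
    rw [inv_smul A t hA, invOf_eq_inv]
  · have htA : ¬IsUnit (t • A).det := by
      simpa [det_smul, isUnit_iff_ne_zero, ht] using hA
    rw [nonsing_inv_apply_not_isUnit _ htA, nonsing_inv_apply_not_isUnit _ hA, smul_zero]

theorem continuousAt_inv_of_det_ne_zero {A : Matrix m m ℝ} (h : A.det ≠ 0) :
    ContinuousAt Inv.inv A :=
  continuousAt_matrix_inv A (by rw [Ring.inverse_eq_inv']; exact continuousAt_inv₀ h)

variable (B C : Matrix m m ℝ) (v w : m → ℝ)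

theorem continuousAt_inv_add_smul_mulVec {t : ℝ} (ht : (B + t • C).det ≠ 0) :
    ContinuousAt (fun s : ℝ => (B + s • C)⁻¹ *ᵥ (v + s • w)) t :=
  (continuous_fst.matrix_mulVec continuous_snd).continuousAt.comp
    (((continuousAt_inv_of_det_ne_zero ht).comp (f := fun s : ℝ => B + s • C) (by fun_prop)).prodMk
      (f := fun s : ℝ => (B + s • C)⁻¹) (g := fun s : ℝ => v + s • w) (by fun_prop))

theorem inv_add_smul_mulVec_eq_inv_add_inv_smul_mulVec {t : ℝ} (ht : t ≠ 0) :
    (B + t • C)⁻¹ *ᵥ (v + t • w) = (C + t⁻¹ • B)⁻¹ *ᵥ (w + t⁻¹ • v) := by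
  have hM : B + t • C = t • (C + t⁻¹ • B) := by
    rw [smul_add, smul_smul, mul_inv_cancel₀ ht, one_smul, add_comm]
  have hv : v + t • w = t • (w + t⁻¹ • v) := by
    rw [smul_add, smul_smul, mul_inv_cancel₀ ht, one_smul, add_comm]
  rw [hM, hv, inv_smul_of_ne_zero _ ht, smul_mulVec, mulVec_smul, smul_smul,
    inv_mul_cancel₀ ht, one_smul]

theorem tendsto_inv_add_smul_mulVec_atTop (hC : C.det ≠ 0) :
    Tendsto (fun t : ℝ => (B + t • C)⁻¹ *ᵥ (v + t • w)) atTop (𝓝 (C⁻¹ *ᵥ w)) := by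
  have h0 := (continuousAt_inv_add_smul_mulVec C B w v (t := 0) (by simpa using hC)).tendsto
  simp only [zero_smul, add_zero] at h0
  refine (h0.comp tendsto_inv_atTop_zero).congr' ?_
  filter_upwards [eventually_gt_atTop 0] with t ht
  exact (inv_add_smul_mulVec_eq_inv_add_inv_smul_mulVec B C v w ht.ne').symm

end Matrix

/-- The K-class path `λ ↦ α̂_K(λ) = (Zᵀ(I + λP_A)Z)⁻¹ Zᵀ(I + λP_A)Y` is
continuous on `[0,∞)`, and if moreover `Zᵀ P_A Z` is positive definite, then
`α̂_K(λ) → (Zᵀ P_A Z)⁻¹ Zᵀ P_A Y` as `λ → ∞`. -/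
theorem kclass_path_continuous_and_limit {n k : ℕ}
    (Z : Matrix (Fin n) (Fin k) ℝ) (Y : Fin n → ℝ)
    (PA : Matrix (Fin n) (Fin n) ℝ)
    (hPsymm : PAᵀ = PA) (hPidem : PA * PA = PA)
    (hZ : (Zᵀ * Z).PosDef) :
    let αK : ℝ → (Fin k → ℝ) := fun lam =>
      ((Zᵀ * (1 + lam • PA) * Z)⁻¹).mulVec ((Zᵀ * (1 + lam • PA)).mulVec Y)
    ContinuousOn αK (Set.Ici 0) ∧
      ((Zᵀ * PA * Z).PosDef →
        Filter.Tendsto αK Filter.atTop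
          (nhds (((Zᵀ * PA * Z)⁻¹).mulVec ((Zᵀ * PA).mulVec Y)))) := by
  intro αK
  have hαK : αK = fun lam =>
      (Zᵀ * Z + lam • (Zᵀ * PA * Z))⁻¹ *ᵥ (Zᵀ *ᵥ Y + lam • ((Zᵀ * PA) *ᵥ Y)) := by
    funext lam
    simp only [αK, Matrix.mul_add, Matrix.add_mul, Matrix.mul_one, Matrix.mul_smul,
      Matrix.smul_mul, add_mulVec, smul_mulVec]
  have hC := posSemidef_transpose_mul_mul_of_isSymm_of_isIdempotentElem Z hPsymm hPidem
  have hdet : ∀ t ∈ Set.Ici (0 : ℝ), (Zᵀ * Z + t • (Zᵀ * PA * Z)).det ≠ 0 := fun t ht =>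
    (hZ.add_posSemidef (hC.smul ht)).det_pos.ne'
  rw [hαK]
  exact ⟨fun t ht => (continuousAt_inv_add_smul_mulVec _ _ _ _ (hdet t ht)).continuousWithinAt,
    fun hCpd => tendsto_inv_add_smul_mulVec_atTop _ _ _ _ hCpd.det_pos.ne'⟩
end

section
/- Suppose for each n, g_n: ℝ^G → ℝ^K are random linear maps converging pointwise in probability to a deterministic injective linear map g: ℝ^G → ℝ^K, and suppose estimators β̂_n satisfy g_n(β̂_n − β_0) → 0 in probability. Then β̂_n → β_0 in probability. -/
open Matrix MeasureTheory ProbabilityTheory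

/-!
An injective `g` on a finite-dimensional space is `C`-antilipschitz, and since `‖(M - g) v‖` is at
most `G` times the largest entry of `M - g` times `‖v‖`, every `M` entrywise close enough to `g`
still satisfies `‖v‖ ≤ 2 C ‖M v‖`. So `β̂ₙ - β₀` is small as soon as `gₙ` is entrywise close to
`g` and the residual `gₙ (β̂ₙ - β₀)` is small, and by a union bound over the finitely many
coordinates both happen with probability tending to one.
-/

namespace MeasureTheory

theorem tendstoInMeasure_of_forall_dist_lt {α ι κ E F : Type*} [MeasurableSpace α]
    {μ : Measure α} {l : Filter ι} [Fintype κ] [PseudoMetricSpace E] [PseudoMetricSpace F]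
    {f : ι → α → E} {c : α → E} {u : κ → ι → α → F} {a : κ → α → F}
    (hu : ∀ k, TendstoInMeasure μ (u k) l (a k))
    (hf : ∀ ε > 0, ∃ δ > 0, ∀ i x, (∀ k, dist (u k i x) (a k x) < δ) → dist (f i x) (c x) < ε) :
    TendstoInMeasure μ f l c := by
  rw [tendstoInMeasure_iff_dist]
  intro ε hε
  obtain ⟨δ, hδ, hfδ⟩ := hf ε hε
  have hsub : ∀ i, {x | ε ≤ dist (f i x) (c x)} ⊆ ⋃ k, {x | δ ≤ dist (u k i x) (a k x)} := by
    intro i x hx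
    by_contra hx'
    simp only [Set.mem_iUnion, Set.mem_ofPred_eq, not_exists, not_le] at hx'
    exact (hfδ i x hx').not_ge hx
  have hsum : Filter.Tendsto (fun i => ∑ k, μ {x | δ ≤ dist (u k i x) (a k x)}) l (nhds 0) := by
    simpa using tendsto_finsetSum Finset.univ fun k _ => tendstoInMeasure_iff_dist.mp (hu k) δ hδ
  exact tendsto_of_tendsto_of_tendsto_of_le_of_le tendsto_const_nhds hsum (fun _ => zero_le)
    fun i => (measure_mono (hsub i)).trans (measure_iUnion_fintype_le _ _)

end MeasureTheory

namespace Matrix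

variable {m n : Type*} [Fintype m] [Fintype n]

theorem norm_mulVec_le_of_norm_le {α : Type*} [NonUnitalSeminormedRing α] (M : Matrix m n α)
    (v : n → α) {η : ℝ} (hη : 0 ≤ η) (hM : ∀ i j, ‖M i j‖ ≤ η) :
    ‖M *ᵥ v‖ ≤ Fintype.card n * η * ‖v‖ := by
  refine (pi_norm_le_iff_of_nonneg (by positivity)).2 fun i => ?_
  calc ‖(M *ᵥ v) i‖ ≤ ∑ j, ‖M i j‖ * ‖v j‖ := norm_sum_le_of_le _ fun j _ => norm_mul_le _ _
    _ ≤ ∑ _j : n, η * ‖v‖ := by gcongr with j; exacts [hM i j, norm_le_pi_norm v j]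
    _ = Fintype.card n * η * ‖v‖ := by simp [mul_assoc]

theorem exists_forall_norm_le_mul_norm_mulVec {g : Matrix m n ℝ}
    (hg : Function.Injective g.mulVec) :
    ∃ C > 0, ∃ η > 0, ∀ M : Matrix m n ℝ, (∀ i j, |M i j - g i j| < η) →
      ∀ v, ‖v‖ ≤ C * ‖M *ᵥ v‖ := by
  obtain ⟨C, hC, hCg⟩ := g.mulVecLin.injective_iff_antilipschitz.mp hg
  have hgv : ∀ v, ‖v‖ ≤ C * ‖g *ᵥ v‖ := fun v => by simpa using hCg.le_mul_dist v 0
  set η : ℝ := (2 * C * (Fintype.card n + 1))⁻¹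
  have hη : 0 < η := by positivity
  have hCη : C * (Fintype.card n * η) ≤ 1 / 2 :=
    calc C * (Fintype.card n * η) ≤ C * ((Fintype.card n + 1) * η) := by gcongr; linarith
      _ = 1 / 2 := by simp only [η]; field_simp
  refine ⟨2 * C, by positivity, η, hη, fun M hM v => ?_⟩
  have hpert : ‖(M - g) *ᵥ v‖ ≤ Fintype.card n * η * ‖v‖ :=
    norm_mulVec_le_of_norm_le _ v hη.le fun i j => by simpa using (hM i j).le
  have : ‖v‖ ≤ C * ‖M *ᵥ v‖ + ‖v‖ / 2 :=
    calc ‖v‖ ≤ C * ‖M *ᵥ v - (M - g) *ᵥ v‖ := by simpa [sub_mulVec] using hgv v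
      _ ≤ C * (‖M *ᵥ v‖ + Fintype.card n * η * ‖v‖) := by gcongr; exact norm_sub_le_of_le le_rfl hpert
      _ ≤ C * ‖M *ᵥ v‖ + ‖v‖ / 2 := by nlinarith [norm_nonneg v]
  linarith

end Matrix

theorem consistency_from_random_linear_maps_general {Ω : Type*} [MeasurableSpace Ω]
    (μ : Measure Ω) {G K : ℕ}
    (gn : ℕ → Ω → Matrix (Fin K) (Fin G) ℝ) (g : Matrix (Fin K) (Fin G) ℝ)
    (hginj : Function.Injective g.mulVec)
    (hconv : ∀ i j, TendstoInMeasure μ (fun n ω => gn n ω i j) Filter.atTop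
      (fun _ => g i j))
    (βhat : ℕ → Ω → (Fin G → ℝ)) (β0 : Fin G → ℝ)
    (hres : ∀ i, TendstoInMeasure μ
      (fun n ω => (gn n ω).mulVec (βhat n ω - β0) i) Filter.atTop (fun _ => 0)) :
    ∀ j, TendstoInMeasure μ (fun n ω => βhat n ω j) Filter.atTop
      (fun _ => β0 j) := by
  intro j
  obtain ⟨C, hC, η, hη, hnear⟩ := exists_forall_norm_le_mul_norm_mulVec hginj
  refine tendstoInMeasure_of_forall_dist_lt
    (u := Sum.elim (fun (p : Fin K × Fin G) n ω => gn n ω p.1 p.2) fun i n ω => (gn n ω *ᵥ (βhat n ω - β0)) i)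
    (a := Sum.elim (fun (p : Fin K × Fin G) _ => g p.1 p.2) fun _ _ => 0)
    (by rintro (⟨i, j⟩ | i); exacts [hconv i j, hres i]) fun ε hε => ?_
  refine ⟨min η (ε / C), by positivity, fun n ω hclose => ?_⟩
  simp only [Sum.forall, Sum.elim_inl, Sum.elim_inr, Real.dist_eq, sub_zero, lt_min_iff] at hclose
  obtain ⟨hgn, hresid⟩ := hclose
  calc dist (βhat n ω j) (β0 j) ≤ ‖βhat n ω - β0‖ := by
        simpa [dist_eq_norm] using norm_le_pi_norm (βhat n ω - β0) j
    _ ≤ C * ‖gn n ω *ᵥ (βhat n ω - β0)‖ := hnear _ (fun i j => (hgn (i, j)).1) _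
    _ < C * (ε / C) := by
        gcongr
        exact (pi_norm_lt_iff (by positivity)).2 fun i => (hresid i).2
    _ = ε := by field_simp

/-- If random linear maps `g_n` converge pointwise (entrywise) in probability to
a deterministic injective linear map `g`, and `g_n(β̂_n − β₀) → 0` in
probability, then `β̂_n → β₀` in probability. -/
theorem consistency_from_random_linear_maps {Ω : Type*} [MeasurableSpace Ω]
    (μ : Measure Ω) [IsProbabilityMeasure μ] {G K : ℕ}
    (gn : ℕ → Ω → Matrix (Fin K) (Fin G) ℝ) (g : Matrix (Fin K) (Fin G) ℝ)
    (hmeas : ∀ n i j, Measurable fun ω => gn n ω i j)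
    (hginj : Function.Injective g.mulVec)
    (hconv : ∀ i j, TendstoInMeasure μ (fun n ω => gn n ω i j) Filter.atTop
      (fun _ => g i j))
    (βhat : ℕ → Ω → (Fin G → ℝ)) (β0 : Fin G → ℝ)
    (hβmeas : ∀ n j, Measurable fun ω => βhat n ω j)
    (hres : ∀ i, TendstoInMeasure μ
      (fun n ω => (gn n ω).mulVec (βhat n ω - β0) i) Filter.atTop (fun _ => 0)) :
    ∀ j, TendstoInMeasure μ (fun n ω => βhat n ω j) Filter.atTop
      (fun _ => β0 j) :=
  consistency_from_random_linear_maps_general μ gn g hginj hconv βhat β0 hres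
end

section
/- Let α̂_K(λ₁) and α̂_K(λ₂) be the unique minimizers of l_OLS + λᵢ·l_IV for λ₁ ≠ λ₂, λ₁, λ₂ ≥ 0, in a setting where Z^T Z is positive definite. If α̂_K(λ₁) = α̂_K(λ₂), then α̂_K(λ₁) minimizes l_IV, i.e., P_A Z α̂_K(λ₁) is the orthogonal projection of P_A Y onto the column space of P_A Z. -/
open Matrix

/-- If `0 ≤ a*t + b*t^2` for all real `t`, then `a = 0`. -/
lemma lin_coeff_zero (a b : ℝ) (h : ∀ t : ℝ, 0 ≤ a * t + b * t ^ 2) : a = 0 := by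
  by_contra ha
  have ha2 : 0 < a ^ 2 := by positivity
  set ε : ℝ := 1 / (|b| + 1) with hε
  have hεpos : 0 < ε := by positivity
  have hb : b * ε < 1 := by
    rw [hε]
    rw [mul_one_div, div_lt_one (by positivity)]
    linarith [le_abs_self b, abs_nonneg b]
  have h1 := h (-a * ε)
  nlinarith [mul_pos ha2 hεpos, h1]

/-- quadratic expansion of a squared norm along a line -/
lemma quad_expand (u w : Fin n → ℝ) (t : ℝ) :
    (u - t • w) ⬝ᵥ (u - t • w) = u ⬝ᵥ u - 2 * t * (u ⬝ᵥ w) + t ^ 2 * (w ⬝ᵥ w) := by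
  have hc : w ⬝ᵥ u = u ⬝ᵥ w := dotProduct_comm w u
  simp [dotProduct_sub, sub_dotProduct, dotProduct_smul, smul_dotProduct, hc,
    smul_eq_mul]
  ring

/-- If two K-class estimators with distinct penalty parameters `λ₁ ≠ λ₂`
coincide, then they minimize the IV loss, i.e. `P_A Z α̂_K(λ₁)` is the
orthogonal projection of `P_A Y` onto the column space of `P_A Z`. -/
theorem kclass_coincide_implies_iv_minimizer {n k : ℕ}
    (Z : Matrix (Fin n) (Fin k) ℝ) (Y : Fin n → ℝ)
    (PA : Matrix (Fin n) (Fin n) ℝ)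
    (hPsymm : PAᵀ = PA) (hPidem : PA * PA = PA)
    (hZ : (Zᵀ * Z).PosDef)
    (lOLS lIV : (Fin k → ℝ) → ℝ)
    (hOLS : ∀ α, lOLS α = (Y - Z.mulVec α) ⬝ᵥ (Y - Z.mulVec α))
    (hIV : ∀ α, lIV α = (PA.mulVec (Y - Z.mulVec α)) ⬝ᵥ (PA.mulVec (Y - Z.mulVec α)))
    (lam1 lam2 : ℝ) (hlam1 : 0 ≤ lam1) (hlam2 : 0 ≤ lam2) (hne : lam1 ≠ lam2)
    (α1 α2 : Fin k → ℝ)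
    (h1 : ∀ α, lOLS α1 + lam1 * lIV α1 ≤ lOLS α + lam1 * lIV α)
    (h2 : ∀ α, lOLS α2 + lam2 * lIV α2 ≤ lOLS α + lam2 * lIV α)
    (heq : α1 = α2) :
    ∀ α, lIV α1 ≤ lIV α := by
  subst heq
  intro α
  set d : Fin k → ℝ := α - α1 with hd
  set u0 : Fin n → ℝ := Y - Z.mulVec α1 with hu0
  set w0 : Fin n → ℝ := Z.mulVec d with hw0
  set u : Fin n → ℝ := PA.mulVec u0 with hu
  set w : Fin n → ℝ := PA.mulVec w0 with hw
  -- expansions along the line α1 + t • d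
  have hres : ∀ t : ℝ, Y - Z.mulVec (α1 + t • d) = u0 - t • w0 := by
    intro t
    simp [hu0, hw0, Matrix.mulVec_add, Matrix.mulVec_smul]
    abel
  have hOLSt : ∀ t : ℝ, lOLS (α1 + t • d)
      = u0 ⬝ᵥ u0 - 2 * t * (u0 ⬝ᵥ w0) + t ^ 2 * (w0 ⬝ᵥ w0) := by
    intro t; rw [hOLS, hres t, quad_expand]
  have hIVt : ∀ t : ℝ, lIV (α1 + t • d)
      = u ⬝ᵥ u - 2 * t * (u ⬝ᵥ w) + t ^ 2 * (w ⬝ᵥ w) := by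
    intro t
    rw [hIV, hres t]
    rw [Matrix.mulVec_sub, Matrix.mulVec_smul]
    exact quad_expand u w t
  have hOLS0 : lOLS α1 = u0 ⬝ᵥ u0 := by rw [hOLS]
  have hIV0 : lIV α1 = u ⬝ᵥ u := by rw [hIV]
  -- stationarity for each lam
  have stat : ∀ lam : ℝ,
      (∀ β, lOLS α1 + lam * lIV α1 ≤ lOLS β + lam * lIV β) →
      -2 * ((u0 ⬝ᵥ w0) + lam * (u ⬝ᵥ w)) = 0 := by
    intro lam hmin
    apply lin_coeff_zero _ ((w0 ⬝ᵥ w0) + lam * (w ⬝ᵥ w))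
    intro t
    have := hmin (α1 + t • d)
    rw [hOLSt t, hIVt t, hOLS0, hIV0] at this
    nlinarith [this]
  have s1 := stat lam1 h1
  have s2 := stat lam2 h2
  have hB : u ⬝ᵥ w = 0 := by
    have hsub : (lam1 - lam2) * (u ⬝ᵥ w) = 0 := by nlinarith [s1, s2]
    have : lam1 - lam2 ≠ 0 := sub_ne_zero.mpr hne
    exact (mul_eq_zero.mp hsub).resolve_left this
  -- conclude using convexity: α = α1 + 1 • d
  have hα : α = α1 + (1 : ℝ) • d := by simp [hd]
  rw [hα, hIVt 1, hIV0, hB]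
  have hwnn : 0 ≤ w ⬝ᵥ w := by
    unfold dotProduct
    exact Finset.sum_nonneg fun i _ => mul_self_nonneg _
  nlinarith [hwnn]
end
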